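/- arXiv:2305.14222 — 3 statements merged into one kernel-verified Lean document; each statement's English description precedes it below -/
import Mathlib

section
/- Weak-plan transfer (Theorem 5): with an m-bisimulation B between high- and low-level systems satisfying properness, for any finite sequence of agent actions A₁,…,Aₙ and any goal φ on high-level fluents: there exist reactions e₁,…,eₙ and a high-level execution of (A₁,e₁)…(Aₙ,eₙ) from the initial state reaching a state satisfying φ, if and only if there exists a low-level execution of the composed agent macros R_{A₁}^{ag} ; … ; R_{Aₙ}^{ag} from the low-level initial state reaching a state whose fluent valuation satisfies φ. -/
inductive PForm (Atom : Type*) where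
  | atom : Atom → PForm Atom
  | neg : PForm Atom → PForm Atom
  | conj : PForm Atom → PForm Atom → PForm Atom

def PSat {S Atom : Type*} (V : S → Atom → Bool) : S → PForm Atom → Prop
  | s, .atom p => V s p = true
  | s, .neg φ => ¬ PSat V s φ
  | s, .conj φ ψ => PSat V s φ ∧ PSat V s ψ

/-- High-level execution of a sequence of agent actions, with existentially
chosen environment reactions. -/
def HDo {SH A EH : Type*} (PossH : A → EH → SH → Prop) (stepH : SH → A → EH → SH) :
    List A → SH → SH → Prop
  | [], s, s' => s' = s
  | a :: σ, s, s' => ∃ e, PossH a e s ∧ HDo PossH stepH σ (stepH s a e) s'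

/-- Low-level execution of the composed agent macros. -/
def LDo {SL A : Type*} (Rag : A → SL → SL → Prop) : List A → SL → SL → Prop
  | [], s, s' => s' = s
  | a :: σ, s, s' => ∃ s₁, Rag a s s₁ ∧ LDo Rag σ s₁ s'

inductive ReachL {SL A EH : Type*} (Rsys : A → EH → SL → SL → Prop) : SL → SL → Prop
  | refl (s : SL) : ReachL Rsys s s
  | tail (s s' s'' : SL) (a : A) (e : EH) :
      ReachL Rsys s s' → Rsys a e s' s'' → ReachL Rsys s s''

theorem psat_congr {SH SL F : Type*} {VH : SH → F → Bool} {VL : SL → F → Bool}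
    {s : SH} {t : SL} (h : VH s = VL t) (φ : PForm F) :
    PSat VH s φ ↔ PSat VL t φ := by
  induction φ with
  | atom p => simp [PSat, h]
  | neg φ ih => simp [PSat, ih]
  | conj φ ψ ih1 ih2 => simp [PSat, ih1, ih2]

/-- Weak-plan transfer. -/
theorem stmt_9 {SH SL A EH F : Type*}
    (PossH : A → EH → SH → Prop) (stepH : SH → A → EH → SH)
    (Rsys : A → EH → SL → SL → Prop) (Rag : A → SL → SL → Prop)
    (VH : SH → F → Bool) (VL : SL → F → Bool)
    (B : SH → SL → Prop) (s0H : SH) (s0L : SL)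
    (fluents : ∀ s_h s_l, B s_h s_l → VH s_h = VL s_l)
    (forth : ∀ s_h s_l, B s_h s_l → ∀ a e, PossH a e s_h →
      ∃ s_l', Rsys a e s_l s_l' ∧ B (stepH s_h a e) s_l')
    (back : ∀ s_h s_l, B s_h s_l → ∀ a e s_l', Rsys a e s_l s_l' →
      PossH a e s_h ∧ B (stepH s_h a e) s_l')
    (proper : ∀ s_l, ReachL Rsys s0L s_l → ∀ a s_l',
      Rag a s_l s_l' ↔ ∃ e, Rsys a e s_l s_l')
    (hinit : B s0H s0L)
    (σ : List A) (φ : PForm F) :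
    (∃ s', HDo PossH stepH σ s0H s' ∧ PSat VH s' φ) ↔
    (∃ s', LDo Rag σ s0L s' ∧ PSat VL s' φ) := by
  suffices h : ∀ σ : List A, ∀ s_h s_l, B s_h s_l → ReachL Rsys s0L s_l →
      ((∃ s', HDo PossH stepH σ s_h s' ∧ PSat VH s' φ) ↔
       (∃ s', LDo Rag σ s_l s' ∧ PSat VL s' φ)) from
    h σ s0H s0L hinit (ReachL.refl s0L)
  intro σ
  induction σ with
  | nil =>
    intro s_h s_l hB _
    simp only [HDo, LDo]
    constructor
    · rintro ⟨s', rfl, hs⟩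
      exact ⟨s_l, rfl, (psat_congr (fluents _ _ hB) φ).mp hs⟩
    · rintro ⟨s', rfl, hs⟩
      exact ⟨s_h, rfl, (psat_congr (fluents _ _ hB) φ).mpr hs⟩
  | cons a σ ih =>
    intro s_h s_l hB hReach
    simp only [HDo, LDo]
    constructor
    · rintro ⟨s', ⟨e, hPoss, hDo⟩, hSat⟩
      obtain ⟨s_l', hR, hB'⟩ := forth _ _ hB a e hPoss
      have hReach' := ReachL.tail _ _ _ a e hReach hR
      obtain ⟨t, hL, hS⟩ := (ih _ _ hB' hReach').mp ⟨s', hDo, hSat⟩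
      exact ⟨t, ⟨s_l', (proper _ hReach a s_l').mpr ⟨e, hR⟩, hL⟩, hS⟩
    · rintro ⟨s', ⟨s₁, hRag, hL⟩, hSat⟩
      obtain ⟨e, hR⟩ := (proper _ hReach a s₁).mp hRag
      obtain ⟨hPoss, hB'⟩ := back _ _ hB a e s₁ hR
      have hReach' := ReachL.tail _ _ _ a e hReach hR
      obtain ⟨t, hH, hS⟩ := (ih _ _ hB' hReach').mpr ⟨s', hL, hSat⟩
      exact ⟨t, ⟨e, hPoss, hH⟩, hS⟩
end

section
/- EnvCanForceBy soundness: in the program-execution game with configurations C, define EnvCanForceBy(c, g) for an environment strategy g : (AgentAction × C) → Reaction as the least predicate closed under: (i) Final(c) and c has no successor implies EnvCanForceBy(c,g); (ii) if some transition exists from c, and for every agent action a that has some executable reaction at c, the reaction g(a,c) is executable for a at c and leads to a configuration satisfying EnvCanForceBy(·,g), then EnvCanForceBy(c,g). Then EnvCanForceBy(c,g) implies: for every play from c in which the agent chooses available actions and the environment answers with g, the play is finite and ends in a final configuration with no successors. -/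
/-- The environment can force termination-in-a-dead-end by strategy `g`. -/
inductive EnvForceBy {C A E : Type*} (Final : C → Prop) (T : C → A × E → C → Prop)
    (g : A → C → E) : C → Prop
  | fin (c : C) : Final c → (¬ ∃ m c', T c m c') → EnvForceBy Final T g c
  | step (c : C) : (∃ m c', T c m c') →
      (∀ a, (∃ e c', T c (a, e) c') → ∃ c', T c (a, g a c) c') →
      (∀ a c', (∃ e c'', T c (a, e) c'') → T c (a, g a c) c' →
        EnvForceBy Final T g c') →
      EnvForceBy Final T g c

/-- Soundness of `EnvForceBy`: every `g`-play from `c` is finite and ends in a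
final configuration with no successors. -/
theorem stmt_14 {C A E : Type*} (Final : C → Prop) (T : C → A × E → C → Prop)
    (g : A → C → E)
    (hfun : ∀ c m c₁ c₂, T c m c₁ → T c m c₂ → c₁ = c₂)
    (c : C) (h : EnvForceBy Final T g c) :
    ∀ p : ℕ → C, p 0 = c →
      (∀ n, (∃ m c', T (p n) m c') →
        ∃ a, (∃ e c', T (p n) (a, e) c') ∧ T (p n) (a, g a (p n)) (p (n + 1))) →
      ∃ n, Final (p n) ∧ ¬ ∃ m c', T (p n) m c' := by
  induction h with
  | fin c hF hN =>
    intro p hp0 _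
    exact ⟨0, by rw [hp0]; exact ⟨hF, hN⟩⟩
  | step c hex hexec _ ih =>
    intro p hp0 hplay
    subst hp0
    obtain ⟨a, hae, hstep⟩ := hplay 0 hex
    obtain ⟨n, hn⟩ := ih a (p 1) hae hstep (fun n => p (n+1)) rfl
      (fun n hn => hplay (n+1) hn)
    exact ⟨n+1, hn⟩
end

section
/- Transfer of executability of system action sequences (Theorem 4 forward direction): if B is an m-bisimulation between high-level LTS H and low-level relations {R_{A,e}}, with (s₀^H, s₀^L) ∈ B, then for every sequence α = (A₁,e₁)…(Aₙ,eₙ): the sequence is executable in H from s₀^H (each step defined/possible) iff there exists a low-level state s_l with (s₀^L, s_l) ∈ R_{A₁,e₁} ; … ; R_{Aₙ,eₙ}; and moreover in that case the resulting high-level state do(α, s₀^H) and any such s_l obtained via B-matched steps satisfy the same fluent formulas. -/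
/-- High-level execution of a sequence of system actions. -/
def HExec {SH A EH : Type*} (PossH : A → EH → SH → Prop) (stepH : SH → A → EH → SH) :
    List (A × EH) → SH → SH → Prop
  | [], s, s' => s' = s
  | (a, e) :: σ, s, s' => PossH a e s ∧ HExec PossH stepH σ (stepH s a e) s'

/-- Low-level execution of the mapped system programs, composed. -/
def LExec {SL A EH : Type*} (Rsys : A → EH → SL → SL → Prop) :
    List (A × EH) → SL → SL → Prop
  | [], s, s' => s' = s
  | (a, e) :: σ, s, s' => ∃ s₁, Rsys a e s s₁ ∧ LExec Rsys σ s₁ s'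

/-- Transfer of executability of system action sequences. -/
theorem stmt_15 {SH SL A EH F : Type*}
    (PossH : A → EH → SH → Prop) (stepH : SH → A → EH → SH)
    (Rsys : A → EH → SL → SL → Prop)
    (VH : SH → F → Bool) (VL : SL → F → Bool)
    (B : SH → SL → Prop) (s0H : SH) (s0L : SL)
    (fluents : ∀ s_h s_l, B s_h s_l → VH s_h = VL s_l)
    (forth : ∀ s_h s_l, B s_h s_l → ∀ a e, PossH a e s_h →
      ∃ s_l', Rsys a e s_l s_l' ∧ B (stepH s_h a e) s_l')
    (back : ∀ s_h s_l, B s_h s_l → ∀ a e s_l', Rsys a e s_l s_l' →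
      PossH a e s_h ∧ B (stepH s_h a e) s_l')
    (hinit : B s0H s0L) (σ : List (A × EH)) :
    ((∃ s_h', HExec PossH stepH σ s0H s_h') ↔ (∃ s_l, LExec Rsys σ s0L s_l)) ∧
    (∀ s_h' s_l, HExec PossH stepH σ s0H s_h' → LExec Rsys σ s0L s_l →
      B s_h' s_l ∧ VH s_h' = VL s_l) := by
  induction σ generalizing s0H s0L with
  | nil =>
    refine ⟨⟨fun _ => ⟨s0L, rfl⟩, fun _ => ⟨s0H, rfl⟩⟩, ?_⟩
    rintro s_h' s_l rfl rfl
    exact ⟨hinit, fluents _ _ hinit⟩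
  | cons p σ ih =>
    obtain ⟨a, e⟩ := p
    constructor
    · constructor
      · rintro ⟨s_h', hp, hrest⟩
        obtain ⟨s1, hR, hB⟩ := forth _ _ hinit a e hp
        obtain ⟨s_l, hl⟩ := (ih _ _ hB).1.mp ⟨s_h', hrest⟩
        exact ⟨s_l, s1, hR, hl⟩
      · rintro ⟨s_l, s1, hR, hrest⟩
        obtain ⟨hp, hB⟩ := back _ _ hinit a e s1 hR
        obtain ⟨s_h', hh⟩ := (ih _ _ hB).1.mpr ⟨s_l, hrest⟩
        exact ⟨s_h', hp, hh⟩
    · rintro s_h' s_l ⟨hp, hh⟩ ⟨s1, hR, hl⟩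
      obtain ⟨_, hB⟩ := back _ _ hinit a e s1 hR
      exact (ih _ _ hB).2 s_h' s_l hh hl
end
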